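/- arXiv:1207.1323 — 3 statements merged into one kernel-verified Lean document; each statement's English description precedes it below -/
import Mathlib

section
/- Let A be an abelian group and H a finite group of order q acting on A by automorphisms such that every nontrivial h ∈ H fixes only the zero element of A. If (a_1, …, a_s) is an H-independent sequence of nonzero elements of A, then the set M(a_1, …, a_s) of all v ∈ A such that the extended sequence (a_1, …, a_s, v) is H-dependent has cardinality at most q^{s+1}. -/
/-!
An `H`-dependence of `(a_1, …, a_s, v)` is a labelling `g` of the entries by elements of `H`,
not all trivial, with `∑ (a_k^{g_k} - a_k) = 0`. Independence of `(a_1, …, a_s)` forces the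
label `h` of `v` to be nontrivial, so `v - v^h` is determined by the labels: it equals
`∑ (a_k^{g_k} - a_k)`. Since `h` has no nonzero fixed points, `x ↦ x - x^h` is injective, so `v`
is determined by the `q^{s+1}` possible labellings.
-/

/-- A finite sequence `(a 0, …, a (s-1))` of elements of `A` is `H`-dependent with respect
to the action `σ : H →* AddAut A` if there exist distinct indices `i 0, …, i (m-1)` (with
`m ≥ 1`) and (not necessarily distinct) nontrivial elements `h 0, …, h (m-1)` of `H` such
that `a (i 0) + ⋯ + a (i (m-1)) = (a (i 0))^(h 0) + ⋯ + (a (i (m-1)))^(h (m-1))`.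
Otherwise the sequence is `H`-independent. -/
def IsHDependent {A H : Type*} [AddCommGroup A] [Group H] (σ : H →* Multiplicative (AddAut A))
    {s : ℕ} (a : Fin s → A) : Prop :=
  ∃ (m : ℕ) (i : Fin m → Fin s) (h : Fin m → H),
    0 < m ∧ Function.Injective i ∧ (∀ j, h j ≠ 1) ∧
      ∑ j, a (i j) = ∑ j, (σ (h j)).toAdd (a (i j))

section

open Function

variable {A H : Type*} [AddCommGroup A] [Group H] {σ : H →* Multiplicative (AddAut A)}

theorem isHDependent_iff_exists_sum_sub_eq_zero {s : ℕ} {a : Fin s → A} :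
    IsHDependent σ a ↔ ∃ g : Fin s → H, g ≠ 1 ∧ ∑ k, ((σ (g k)).toAdd (a k) - a k) = 0 := by
  constructor
  · rintro ⟨m, i, h, hm, hi, hh, hsum⟩
    refine ⟨extend i h 1, fun hg => hh ⟨0, hm⟩ ?_, ?_⟩
    · simpa [hi.extend_apply] using congrFun hg (i ⟨0, hm⟩)
    · rw [← Fintype.sum_of_injective i hi _ _ ?_ fun j => by rw [hi.extend_apply],
        Finset.sum_sub_distrib, ← hsum, sub_self]
      intro k hk
      simp [extend_apply' _ _ _ hk]
  · classical
    rintro ⟨g, hg, hsum⟩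
    set S := Finset.univ.filter fun k => g k ≠ 1
    have hS : S.Nonempty := by
      obtain ⟨k, hk⟩ := Function.ne_iff.1 hg
      exact ⟨k, by simpa [S] using hk⟩
    let i := S.orderEmbOfFin rfl
    refine ⟨S.card, i, fun j => g (i j), S.card_pos.2 hS, i.injective,
      fun j => (Finset.mem_filter.1 (S.orderEmbOfFin_mem rfl j)).2, ?_⟩
    rw [eq_comm, ← sub_eq_zero, ← Finset.sum_sub_distrib]
    refine (Fintype.sum_of_injective i i.injective _
      (fun k => (σ (g k)).toAdd (a k) - a k) ?_ fun j => rfl).trans hsum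
    intro k hk
    have hgk : g k = 1 := by
      by_contra hgk
      exact hk (by simp [i, S, hgk])
    simp [hgk]

theorem exists_sub_eq_sum_of_isHDependent_snoc {s : ℕ} {a : Fin s → A} (ha : ¬IsHDependent σ a)
    {v : A} (hv : IsHDependent σ (Fin.snoc a v : Fin (s + 1) → A)) :
    ∃ g : Fin s → H, ∃ h ≠ 1, v - (σ h).toAdd v = ∑ k, ((σ (g k)).toAdd (a k) - a k) := by
  obtain ⟨g, hg, hsum⟩ := isHDependent_iff_exists_sum_sub_eq_zero.1 hv
  simp only [Fin.sum_univ_castSucc, Fin.snoc_castSucc, Fin.snoc_last] at hsum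
  have hlast : g (Fin.last s) ≠ 1 := by
    intro hlast
    refine ha (isHDependent_iff_exists_sum_sub_eq_zero.2 ⟨fun k => g k.castSucc, ?_, ?_⟩)
    · intro hinit
      exact hg (funext (Fin.lastCases hlast fun k => congrFun hinit k))
    · simpa [hlast] using hsum
  exact ⟨fun k => g k.castSucc, g (Fin.last s), hlast, by
    rw [← neg_sub, eq_neg_of_add_eq_zero_left hsum]⟩

theorem sub_toAdd_injective {h : H} (hfree : ∀ x : A, (σ h).toAdd x = x → x = 0) :
    Injective fun x => x - (σ h).toAdd x := by
  intro x y hxy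
  rw [← sub_eq_zero]
  apply hfree
  rw [map_sub, eq_comm, ← sub_eq_sub_iff_sub_eq_sub]
  exact hxy

end

theorem card_of_extension_dependent_set_general
    (A : Type*) [AddCommGroup A] (H : Type*) [Group H] [Finite H] (q : ℕ)
    (hq : Nat.card H = q) (σ : H →* Multiplicative (AddAut A))
    (hfree : ∀ h : H, h ≠ 1 → ∀ a : A, (σ h).toAdd a = a → a = 0)
    (s : ℕ) (a : Fin s → A) (hind : ¬ IsHDependent σ a) :
    {v : A | IsHDependent σ (Fin.snoc a v)}.Finite ∧
      {v : A | IsHDependent σ (Fin.snoc a v)}.ncard ≤ q ^ (s + 1) := by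
  set M := {v : A | IsHDependent σ (Fin.snoc a v)}
  choose! g h hh hgh using fun v (hv : v ∈ M) => exists_sub_eq_sum_of_isHDependent_snoc hind hv
  have hinj : Set.InjOn (fun v => (g v, h v)) M := by
    intro v hv w hw hvw
    obtain ⟨hg, hh'⟩ := Prod.mk.inj hvw
    apply sub_toAdd_injective (hfree _ (hh v hv))
    change v - _ = w - _
    rw [hgh v hv, hg, hh', hgh w hw]
  refine ⟨Set.Finite.of_injOn (Set.mapsTo_univ _ _) hinj Set.finite_univ, ?_⟩
  calc M.ncard ≤ (Set.univ : Set ((Fin s → H) × H)).ncard :=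
        Set.ncard_le_ncard_of_injOn _ (Set.mapsTo_univ _ _) hinj Set.finite_univ
    _ = q ^ (s + 1) := by
        rw [Set.ncard_univ, Nat.card_prod, Nat.card_fun, Nat.card_fin, hq, pow_succ]

/-- **Lemma 2.1.** Let `H` be a finite group of order `q` acting on an abelian group `A`
with `C_A(h) = 0` for all nontrivial `h ∈ H`. If `(a 0, …, a (s-1))` is an `H`-independent
sequence of nonzero elements of `A`, then the set `M` of all `v ∈ A` such that the extended
sequence `(a 0, …, a (s-1), v)` is `H`-dependent is finite of cardinality at most
`q ^ (s + 1)`. -/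
theorem card_of_extension_dependent_set
    (A : Type*) [AddCommGroup A] (H : Type*) [Group H] [Finite H] (q : ℕ)
    (hq : Nat.card H = q) (σ : H →* Multiplicative (AddAut A))
    (hfree : ∀ h : H, h ≠ 1 → ∀ a : A, (σ h).toAdd a = a → a = 0)
    (s : ℕ) (a : Fin s → A) (hne : ∀ j, a j ≠ 0) (hind : ¬ IsHDependent σ a) :
    {v : A | IsHDependent σ (Fin.snoc a v)}.Finite ∧
      {v : A | IsHDependent σ (Fin.snoc a v)}.ncard ≤ q ^ (s + 1) :=
  card_of_extension_dependent_set_general A H q hq σ hfree s a hind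
end

section
/- Let A be a torsion-free abelian group and H a finite group acting on A by automorphisms such that every nontrivial h ∈ H fixes only the zero element of A. Let n be a positive integer and h_1, …, h_n not necessarily distinct nontrivial elements of H. If an element a ∈ A satisfies n·a = a^{h_1} + ⋯ + a^{h_n}, then a = 0. -/
/-!
The additive subgroup generated by the `H`-orbit of `a` is finitely generated and torsion-free,
hence a lattice `ℤ^r`. Sending `x` to `(ψ (g • x))_{g ∈ H}`, for a coordinate embedding
`ψ : ℤ^r → ℝ^r`, embeds it into a Euclidean space on which `H` acts by isometries. There the
images `u_j` of `h_j • a` have at most the norm of the image `u` of `a` and average to it, so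
expanding `∑ ‖u_j - u‖²` shows that it vanishes: `a` is fixed by `h_1 ≠ 1`, hence `a = 0`.
-/

open Finset

theorem eq_of_card_nsmul_eq_sum_of_norm_le {ι E : Type*} [Fintype ι] [NormedAddCommGroup E]
    [InnerProductSpace ℝ E] {u : ι → E} {a : E} (hu : ∀ i, ‖u i‖ ≤ ‖a‖)
    (hsum : Fintype.card ι • a = ∑ i, u i) (i : ι) : u i = a := by
  have hsq : ∑ i, ‖u i - a‖ ^ 2 ≤ 0 :=
    calc ∑ i, ‖u i - a‖ ^ 2 = ∑ i, (‖u i‖ ^ 2 - 2 * inner ℝ (u i) a + ‖a‖ ^ 2) := by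
          simp only [norm_sub_sq_real]
      _ ≤ ∑ i, (2 * ‖a‖ ^ 2 - 2 * inner ℝ (u i) a) := by
          gcongr with i
          nlinarith [pow_le_pow_left₀ (norm_nonneg _) (hu i) 2]
      _ = 2 * (Fintype.card ι * ‖a‖ ^ 2 - inner ℝ (∑ i, u i) a) := by
          simp only [sum_sub_distrib, ← mul_sum, sum_inner, sum_const, card_univ, nsmul_eq_mul]
          ring
      _ = 0 := by
          rw [← hsum, ← Nat.cast_smul_eq_nsmul ℝ, real_inner_smul_left,
            real_inner_self_eq_norm_sq, sub_self, mul_zero]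
  have hi := (sum_eq_zero_iff_of_nonneg fun i _ => sq_nonneg ‖u i - a‖).1
    (le_antisymm hsq (sum_nonneg fun i _ => sq_nonneg _)) i (mem_univ i)
  simpa [sub_eq_zero] using hi

section OrbitMap

variable (G : Type*) {M E : Type*} [Group G] [AddCommGroup M] [DistribMulAction G M]
  [NormedAddCommGroup E]

def orbitMap (ψ : M →+ E) : M →+ PiLp 2 (fun _ : G => E) where
  toFun x := WithLp.toLp 2 fun g => ψ (g • x)
  map_zero' := by ext; simp
  map_add' x y := by ext; simp

variable {G}

theorem orbitMap_apply (ψ : M →+ E) (x : M) (g : G) : orbitMap G ψ x g = ψ (g • x) := rfl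

theorem norm_orbitMap_smul [Fintype G] (ψ : M →+ E) (k : G) (x : M) :
    ‖orbitMap G ψ (k • x)‖ = ‖orbitMap G ψ x‖ := by
  simp only [PiLp.norm_eq_of_L2, orbitMap_apply, smul_smul]
  congr 1
  exact Fintype.sum_equiv (Equiv.mulRight k) _ _ fun _ => rfl

theorem orbitMap_injective {ψ : M →+ E} (hψ : Function.Injective ψ) :
    Function.Injective (orbitMap G ψ) := fun x y hxy => by
  simpa using hψ (congrArg (· 1) hxy)

end OrbitMap

theorem exists_injective_addMonoidHom_euclideanSpace (M : Type*) [AddCommGroup M]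
    [Module.Finite ℤ M] [IsAddTorsionFree M] :
    ∃ (r : ℕ) (ψ : M →+ EuclideanSpace ℝ (Fin r)), Function.Injective ψ := by
  let b := Module.finBasis ℤ M
  exact ⟨_, (WithLp.addEquiv 2 _).symm.toAddMonoidHom.comp
      ((AddMonoidHom.compLeft (Int.castAddHom ℝ) _).comp b.equivFun.toAddMonoidHom),
    (WithLp.addEquiv 2 _).symm.injective.comp
      ((Int.cast_injective.comp_left).comp b.equivFun.injective)⟩

theorem smul_eq_self_of_nsmul_eq_sum_smul {G M : Type*} [Group G] [Finite G] [AddCommGroup M]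
    [DistribMulAction G M] [Module.Finite ℤ M] [IsAddTorsionFree M] {n : ℕ} (g : Fin n → G)
    {a : M} (ha : n • a = ∑ j, g j • a) (j : Fin n) : g j • a = a := by
  have := Fintype.ofFinite G
  obtain ⟨r, ψ, hψ⟩ := exists_injective_addMonoidHom_euclideanSpace M
  refine orbitMap_injective (G := G) hψ (eq_of_card_nsmul_eq_sum_of_norm_le
    (fun j => (norm_orbitMap_smul ψ (g j) a).le) ?_ j)
  rw [Fintype.card_fin, ← map_nsmul, ha, map_sum]

section OrbitSpan

variable {G M : Type*} [Group G] [AddCommGroup M] [DistribMulAction G M]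

theorem smul_mem_closure_orbit (g : G) {a x : M}
    (hx : x ∈ AddSubgroup.closure (MulAction.orbit G a)) :
    g • x ∈ AddSubgroup.closure (MulAction.orbit G a) := by
  induction hx using AddSubgroup.closure_induction with
  | mem y hy =>
    exact AddSubgroup.subset_closure (MulAction.mem_orbit_of_mem_orbit g hy)
  | zero => simp
  | add y z _ _ hy hz => simpa using add_mem hy hz
  | neg y _ hy => simpa using neg_mem hy

instance (a : M) : DistribMulAction G (AddSubgroup.closure (MulAction.orbit G a)) where
  smul g x := ⟨g • x, smul_mem_closure_orbit g x.2⟩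
  one_smul x := Subtype.ext (one_smul G (x : M))
  mul_smul g k x := Subtype.ext (mul_smul g k (x : M))
  smul_zero g := Subtype.ext (smul_zero g)
  smul_add g x y := Subtype.ext (smul_add g (x : M) y)

end OrbitSpan

abbrev DistribMulAction.ofAddAut {H A : Type*} [Group H] [AddCommGroup A]
    (σ : H →* Multiplicative (AddAut A)) : DistribMulAction H A where
  smul g x := (σ g).toAdd x
  one_smul x := by simp [HSMul.hSMul]
  mul_smul g k x := by simp [HSMul.hSMul]
  smul_zero g := map_zero (σ g).toAdd
  smul_add g := map_add (σ g).toAdd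

/-- **Lemma 2.2.** Let `A` be a torsion-free abelian group and `H` a finite group acting on
`A` by automorphisms with `C_A(h) = 0` for all nontrivial `h ∈ H`. Let `n` be a positive
integer and `h 0, …, h (n-1)` not necessarily distinct nontrivial elements of `H`. If
`n • a = a^(h 0) + ⋯ + a^(h (n-1))` for an element `a ∈ A`, then `a = 0`. -/
theorem eq_zero_of_nsmul_eq_sum_images
    (A : Type*) [AddCommGroup A]
    (htf : ∀ (n : ℕ) (a : A), n ≠ 0 → n • a = 0 → a = 0)
    (H : Type*) [Group H] [Finite H] (σ : H →* Multiplicative (AddAut A))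
    (hfree : ∀ h : H, h ≠ 1 → ∀ a : A, (σ h).toAdd a = a → a = 0)
    (n : ℕ) (hn : 0 < n) (h : Fin n → H) (hh : ∀ j, h j ≠ 1)
    (a : A) (ha : n • a = ∑ j, (σ (h j)).toAdd a) : a = 0 := by
  let := DistribMulAction.ofAddAut σ
  have : IsAddTorsionFree A := ⟨fun m hm x y hxy => sub_eq_zero.1 <|
    htf m (x - y) hm (by simpa [nsmul_sub, sub_eq_zero] using hxy)⟩
  let S := AddSubgroup.closure (MulAction.orbit H a)
  have : Module.Finite ℤ S := Module.Finite.iff_addGroup_fg.2 <|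
    (AddGroup.fg_iff_addSubgroup_fg S).2 <| (AddSubgroup.fg_iff S).2 ⟨_, rfl, Set.finite_range _⟩
  let a' : S := ⟨a, AddSubgroup.subset_closure (MulAction.mem_orbit_self a)⟩
  have ha' : n • a' = ∑ j, h j • a' := Subtype.ext (by push_cast; exact ha)
  let j₀ : Fin n := ⟨0, hn⟩
  exact hfree (h j₀) (hh j₀) a
    (congrArg Subtype.val (smul_eq_self_of_nsmul_eq_sum_smul h ha' j₀))
end

section
/- For all positive integers c and q there exists a constant p_0 = p_0(c,q), depending only on c and q, with the following property: if p > p_0 is a prime, A is an elementary abelian group of order p², H is a group of order q acting on A by automorphisms such that every nontrivial h ∈ H fixes only the zero element of A, and b is a nonzero element of A, then the constant sequence (b, b, …, b) of length c is H-independent. -/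
open Finset MonoidAlgebra HopfAlgebra
open scoped Matrix

namespace MonoidAlgebra

local notation "⟪" x ", " y "⟫" => dotProduct (DFunLike.coe (coeff x)) (DFunLike.coe (coeff y))

section CommRing

variable {R G : Type*} [CommRing R] [Group G]

theorem coeff_antipode (x : MonoidAlgebra R G) (g : G) :
    (antipode R x).coeff g = x.coeff g⁻¹ := by
  classical
  induction x using MonoidAlgebra.induction_linear with
  | zero => simp
  | add x y hx hy => simp [hx, hy]
  | single h r => simp [Finsupp.single_apply, inv_eq_iff_eq_inv, CommSemiring.antipode_eq_id]

variable [Fintype G]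

theorem coeff_mul_eq_sum (x y : MonoidAlgebra R G) (g : G) :
    (x * y).coeff g = ∑ h, x.coeff h * y.coeff (h⁻¹ * g) := by
  rw [coeff_mul_apply_left, Finsupp.sum_fintype]
  simp

theorem coeff_dotProduct_mul_eq_dotProduct_mul_antipode (x y z : MonoidAlgebra R G) :
    ⟪x * y, z⟫ = ⟪x, z * antipode R y⟫ := by
  simp only [dotProduct, coeff_mul_eq_sum, coeff_antipode, sum_mul, mul_sum, mul_inv_rev, inv_inv]
  rw [sum_comm]
  exact sum_congr rfl fun h _ => sum_congr rfl fun g _ => by ring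

theorem coeff_dotProduct_self_mul_single (x : MonoidAlgebra R G) (g : G) :
    ⟪x * single g (1 : R), x * single g (1 : R)⟫ = ⟪x, x⟫ := by
  rw [coeff_dotProduct_mul_eq_dotProduct_mul_antipode, antipode_single, mul_assoc,
    single_mul_single, mul_inv_cancel, CommSemiring.antipode_eq_id, LinearMap.id_apply, mul_one,
    ← one_def, mul_one]

theorem coeff_dotProduct_mul_single_sub_self (x : MonoidAlgebra R G) (g : G) :
    ⟪x * single g (1 : R) - x, x * single g (1 : R) - x⟫ =
      2 * (⟪x, x⟫ - ⟪x * single g (1 : R), x⟫) := by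
  simp only [coeff_sub, Finsupp.coe_sub, sub_dotProduct, dotProduct_sub]
  rw [coeff_dotProduct_self_mul_single, dotProduct_comm ⇑x.coeff ⇑(x * single g (1 : R)).coeff]
  ring

end CommRing

section LinearOrder

variable {R G : Type*} [CommRing R] [LinearOrder R] [IsStrictOrderedRing R] [Fintype G]

theorem coeff_dotProduct_self_nonneg (x : MonoidAlgebra R G) : 0 ≤ ⟪x, x⟫ :=
  Fintype.sum_nonneg fun _ => mul_self_nonneg _

theorem coeff_dotProduct_self_eq_zero {x : MonoidAlgebra R G} : ⟪x, x⟫ = 0 ↔ x = 0 := by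
  rw [dotProduct_self_eq_zero, Finsupp.coe_eq_zero, coeff_eq_zero]

variable [Group G]

theorem mul_antipode_eq_zero_of_mul_add_eq_zero {x a b : MonoidAlgebra R G}
    (hx : x * (antipode R a * a + antipode R b * b) = 0) :
    x * antipode R a = 0 ∧ x * antipode R b = 0 := by
  have hsq (c : MonoidAlgebra R G) :
      ⟪x * (antipode R c * c), x⟫ = ⟪x * antipode R c, x * antipode R c⟫ := by
    rw [← mul_assoc, coeff_dotProduct_mul_eq_dotProduct_mul_antipode]
  have hsum :
      ⟪x * antipode R a, x * antipode R a⟫ + ⟪x * antipode R b, x * antipode R b⟫ = 0 := by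
    rw [← hsq, ← hsq, ← add_dotProduct, ← Finsupp.coe_add, ← coeff_add, ← mul_add, hx]
    simp
  obtain ⟨ha, hb⟩ := (add_eq_zero_iff_of_nonneg (coeff_dotProduct_self_nonneg _)
    (coeff_dotProduct_self_nonneg _)).1 hsum
  exact ⟨coeff_dotProduct_self_eq_zero.1 ha, coeff_dotProduct_self_eq_zero.1 hb⟩

theorem mul_single_eq_self_of_sum_eq_zero {ι : Type*} {s : Finset ι} {g : ι → G}
    {x : MonoidAlgebra R G} (hx : ∑ i ∈ s, (x * single (g i) (1 : R) - x) = 0) :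
    ∀ i ∈ s, x * single (g i) (1 : R) = x := by
  have hterm (i : ι) : 0 ≤ ⟪x, x⟫ - ⟪x * single (g i) (1 : R), x⟫ := by
    have := coeff_dotProduct_mul_single_sub_self x (g i)
    linarith [coeff_dotProduct_self_nonneg (x * single (g i) (1 : R) - x)]
  have hsum : ∑ i ∈ s, (⟪x, x⟫ - ⟪x * single (g i) (1 : R), x⟫) = 0 := by
    have : ⟪∑ i ∈ s, (x * single (g i) (1 : R) - x), x⟫ =
        -∑ i ∈ s, (⟪x, x⟫ - ⟪x * single (g i) (1 : R), x⟫) := by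
      simp only [coeff_sum, Finsupp.coe_finsetSum, sum_dotProduct, coeff_sub, Finsupp.coe_sub,
        sub_dotProduct, ← sum_neg_distrib, neg_sub]
    rwa [hx, coeff_zero, Finsupp.coe_zero, zero_dotProduct, zero_eq_neg] at this
  intro i hi
  rw [← sub_eq_zero, ← coeff_dotProduct_self_eq_zero, coeff_dotProduct_mul_single_sub_self,
    (sum_eq_zero_iff_of_nonneg fun i _ => hterm i).1 hsum i hi, mul_zero]

end LinearOrder

section Stabilizer

variable {R G : Type*} [CommRing R] [Group G]

def mulSingleStabilizer (x : MonoidAlgebra R G) : Subgroup G where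
  carrier := {g | x * single g 1 = x}
  mul_mem' {g h} hg hh := by
    simp only [Set.mem_ofPred_eq] at *
    rw [← mul_one (1 : R), ← single_mul_single, ← mul_assoc, hg, hh]
  one_mem' := by simp [← one_def]
  inv_mem' {g} hg := by
    simp only [Set.mem_ofPred_eq] at *
    conv_lhs =>
      rw [← hg, mul_assoc, single_mul_single, mul_inv_cancel, mul_one, ← one_def, mul_one]

variable (R) in
noncomputable def subgroupSum (K : Subgroup G) [Fintype K] : MonoidAlgebra R G :=
  ∑ k : K, single (k : G) 1

variable (K : Subgroup G) [Fintype K]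

theorem antipode_subgroupSum : antipode R (subgroupSum R K) = subgroupSum R K := by
  simp only [subgroupSum, map_sum, antipode_single, CommSemiring.antipode_eq_id,
    LinearMap.id_apply]
  exact Fintype.sum_equiv (Equiv.inv K) _ _ fun k => rfl

theorem single_mul_subgroupSum {k : G} (hk : k ∈ K) :
    single k (1 : R) * subgroupSum R K = subgroupSum R K := by
  simp only [subgroupSum, mul_sum, single_mul_single, mul_one]
  exact Fintype.sum_equiv (Equiv.mulLeft ⟨k, hk⟩) _ _ fun z => rfl

theorem mul_subgroupSum_of_le_mulSingleStabilizer {x : MonoidAlgebra R G}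
    (hK : K ≤ mulSingleStabilizer x) : x * subgroupSum R K = Fintype.card K • x := by
  simp only [subgroupSum, mul_sum]
  rw [sum_congr rfl fun k _ => hK k.2, sum_const, card_univ]

end Stabilizer

section Relator

variable {R G ι : Type*} [CommRing R] [Group G] [Fintype ι]

variable (R) in
noncomputable def relator (g : ι → G) : MonoidAlgebra R G := ∑ i, (single (g i) 1 - 1)

variable (R) in
noncomputable def relatorSquares [Fintype G] [DecidableEq G] (g : ι → G) (i : ι) :
    MonoidAlgebra R G :=
  antipode R (relator R g) * relator R g +
    antipode R (subgroupSum R (Subgroup.zpowers (g i))) * subgroupSum R (Subgroup.zpowers (g i))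

theorem eq_zero_of_mul_relatorSquares_eq_zero [LinearOrder R] [IsStrictOrderedRing R]
    [Fintype G] [DecidableEq G] {g : ι → G} {i : ι} {x : MonoidAlgebra R G}
    (hx : x * relatorSquares R g i = 0) : x = 0 := by
  obtain ⟨hrel, hsum⟩ := mul_antipode_eq_zero_of_mul_add_eq_zero hx
  have hfix : ∀ j ∈ univ, x * single (g j)⁻¹ (1 : R) = x := by
    refine mul_single_eq_self_of_sum_eq_zero ?_
    simpa only [relator, map_sum, map_sub, antipode_single, HopfAlgebra.antipode_one,
      CommSemiring.antipode_eq_id, LinearMap.id_apply, mul_sum, mul_sub, mul_one] using hrel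
  have hle : Subgroup.zpowers (g i) ≤ mulSingleStabilizer x :=
    Subgroup.zpowers_le.2 (inv_mem_iff.1 (hfix i (mem_univ i)))
  rw [antipode_subgroupSum, mul_subgroupSum_of_le_mulSingleStabilizer _ hle] at hsum
  have hcard : Fintype.card (Subgroup.zpowers (g i)) ≠ 0 := Fintype.card_ne_zero
  rw [← coeff_eq_zero, ← nsmul_eq_zero_iff_right hcard, ← coeff_smul, hsum, coeff_zero]

end Relator

section Matrix

variable {R G : Type*} [CommRing R] [Group G] [Fintype G]

def rightMulMatrix (w : MonoidAlgebra R G) : Matrix G G R :=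
  Matrix.of fun g h => w.coeff (h⁻¹ * g)

theorem coeff_mul_eq_mulVec (x w : MonoidAlgebra R G) :
    ⇑(x * w).coeff = rightMulMatrix w *ᵥ ⇑x.coeff := by
  ext g
  simp only [coeff_mul_eq_sum, Matrix.mulVec, dotProduct, rightMulMatrix, Matrix.of_apply,
    mul_comm]

variable [DecidableEq G]

theorem exists_mul_eq_det_smul_one (w : MonoidAlgebra R G) :
    ∃ a : MonoidAlgebra R G, a * w = (rightMulMatrix w).det • 1 := by
  refine ⟨ofCoeff (Finsupp.equivFunOnFinite.symm
    ((rightMulMatrix w).adjugate *ᵥ ⇑(1 : MonoidAlgebra R G).coeff)), ?_⟩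
  apply coeff_injective
  apply DFunLike.coe_injective
  rw [coeff_mul_eq_mulVec, coeff_ofCoeff, Finsupp.coe_equivFunOnFinite_symm, Matrix.mulVec_mulVec,
    Matrix.mul_adjugate, Matrix.smul_mulVec, Matrix.one_mulVec, coeff_smul, Finsupp.coe_smul]

theorem det_rightMulMatrix_ne_zero [IsDomain R] {w : MonoidAlgebra R G}
    (hw : ∀ x : MonoidAlgebra R G, x * w = 0 → x = 0) : (rightMulMatrix w).det ≠ 0 := by
  rw [Ne, ← Matrix.exists_mulVec_eq_zero_iff]
  rintro ⟨v, hv0, hv⟩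
  have hx : ofCoeff (Finsupp.equivFunOnFinite.symm v) * w = 0 := by
    apply coeff_injective
    apply DFunLike.coe_injective
    rw [coeff_mul_eq_mulVec, coeff_ofCoeff, Finsupp.coe_equivFunOnFinite_symm, hv]
    rfl
  apply hv0
  simpa using congr_arg (fun y : MonoidAlgebra R G => ⇑y.coeff) (hw _ hx)

end Matrix

section L1Norm

variable {R G : Type*} [CommRing R] [LinearOrder R] [Fintype G]

def l1Norm (x : MonoidAlgebra R G) : R := ∑ g, |x.coeff g|

theorem l1Norm_antipode [Group G] (x : MonoidAlgebra R G) :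
    l1Norm (antipode R x) = l1Norm x := by
  simp only [l1Norm, coeff_antipode]
  exact Fintype.sum_equiv (Equiv.inv G) _ _ fun g => rfl

variable [IsStrictOrderedRing R]

theorem l1Norm_nonneg (x : MonoidAlgebra R G) : 0 ≤ l1Norm x :=
  sum_nonneg fun _ _ => abs_nonneg _

theorem abs_coeff_le_l1Norm (x : MonoidAlgebra R G) (g : G) : |x.coeff g| ≤ l1Norm x :=
  single_le_sum (fun h _ => abs_nonneg (x.coeff h)) (mem_univ g)

theorem l1Norm_add_le (x y : MonoidAlgebra R G) : l1Norm (x + y) ≤ l1Norm x + l1Norm y := by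
  rw [l1Norm, l1Norm, l1Norm, ← sum_add_distrib]
  exact sum_le_sum fun g _ => abs_add_le _ _

theorem l1Norm_sub_le (x y : MonoidAlgebra R G) : l1Norm (x - y) ≤ l1Norm x + l1Norm y := by
  rw [l1Norm, l1Norm, l1Norm, ← sum_add_distrib]
  exact sum_le_sum fun g _ => abs_sub _ _

theorem l1Norm_sum_le {ι : Type*} (s : Finset ι) (x : ι → MonoidAlgebra R G) :
    l1Norm (∑ i ∈ s, x i) ≤ ∑ i ∈ s, l1Norm (x i) := by
  simp only [l1Norm, coeff_sum, Finsupp.coe_finsetSum, Finset.sum_apply]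
  exact (sum_le_sum fun g _ => abs_sum_le_sum_abs _ _).trans_eq sum_comm

theorem l1Norm_single [DecidableEq G] (g : G) (r : R) : l1Norm (single g r) = |r| := by
  simp [l1Norm, Finsupp.single_apply, apply_ite]

theorem l1Norm_mul_le [Group G] (x y : MonoidAlgebra R G) :
    l1Norm (x * y) ≤ l1Norm x * l1Norm y := by
  calc l1Norm (x * y) ≤ ∑ g, ∑ h, |x.coeff h| * |y.coeff (h⁻¹ * g)| := by
        simp only [l1Norm, coeff_mul_eq_sum, ← abs_mul]
        exact sum_le_sum fun g _ => abs_sum_le_sum_abs _ _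
    _ = ∑ h, |x.coeff h| * ∑ g, |y.coeff (h⁻¹ * g)| := by
        rw [sum_comm]
        simp only [mul_sum]
    _ = l1Norm x * l1Norm y := by
        rw [l1Norm, sum_mul]
        exact sum_congr rfl fun h _ =>
          congr_arg _ (Fintype.sum_equiv (Equiv.mulLeft h⁻¹) _ _ fun g => rfl)

end L1Norm

section Bounds

variable {R G ι : Type*} [CommRing R] [LinearOrder R] [IsStrictOrderedRing R] [Group G]
  [Fintype G] [DecidableEq G] [Fintype ι]

theorem l1Norm_relator_le (g : ι → G) : l1Norm (relator R g) ≤ 2 * Fintype.card ι := by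
  calc l1Norm (relator R g)
      ≤ ∑ i : ι, (l1Norm (single (g i) (1 : R)) + l1Norm (1 : MonoidAlgebra R G)) :=
        (l1Norm_sum_le _ _).trans (sum_le_sum fun i _ => l1Norm_sub_le _ _)
    _ = 2 * Fintype.card ι := by
        simp [one_def, l1Norm_single, mul_comm, one_add_one_eq_two]

theorem l1Norm_subgroupSum_le (K : Subgroup G) [Fintype K] :
    l1Norm (subgroupSum R K) ≤ Fintype.card G := by
  calc l1Norm (subgroupSum R K) ≤ ∑ k : K, l1Norm (single (k : G) (1 : R)) := l1Norm_sum_le _ _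
    _ = Fintype.card K := by simp [l1Norm_single]
    _ ≤ Fintype.card G := by
        exact_mod_cast Fintype.card_le_of_injective _ Subtype.val_injective

theorem l1Norm_relatorSquares_le (g : ι → G) (i : ι) :
    l1Norm (relatorSquares R g i) ≤ 4 * Fintype.card ι ^ 2 + Fintype.card G ^ 2 := by
  have hmul (x : MonoidAlgebra R G) (B : R) (hx : l1Norm x ≤ B) :
      l1Norm (antipode R x * x) ≤ B ^ 2 := by
    calc l1Norm (antipode R x * x) ≤ l1Norm x * l1Norm x := by
          simpa only [l1Norm_antipode] using l1Norm_mul_le (antipode R x) x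
      _ ≤ B ^ 2 := by nlinarith [l1Norm_nonneg x]
  calc l1Norm (relatorSquares R g i)
      ≤ (2 * Fintype.card ι) ^ 2 + Fintype.card G ^ 2 :=
        (l1Norm_add_le _ _).trans (add_le_add (hmul _ _ (l1Norm_relator_le g))
          (hmul _ _ (l1Norm_subgroupSum_le _)))
    _ = 4 * Fintype.card ι ^ 2 + Fintype.card G ^ 2 := by ring

end Bounds

end MonoidAlgebra

namespace Representation

section

variable {R G A ι : Type*} [CommRing R] [Group G] [AddCommGroup A] [Module R A] [Fintype ι]
  (ρ : Representation R G A)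

theorem asAlgebraHom_relator_apply (g : ι → G) (b : A) :
    ρ.asAlgebraHom (relator R g) b = ∑ i, (ρ (g i) b - b) := by
  simp [relator, one_def, LinearMap.sum_apply, Nat.cast_smul_eq_nsmul]

theorem asAlgebraHom_subgroupSum_apply_eq_zero {K : Subgroup G} [Fintype K] {k : G}
    (hk : k ∈ K) (hfree : ∀ a, ρ k a = a → a = 0) (b : A) :
    ρ.asAlgebraHom (subgroupSum R K) b = 0 := by
  apply hfree
  rw [← asAlgebraHom_single_one, ← Module.End.mul_apply, ← map_mul, single_mul_subgroupSum K hk]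

theorem asAlgebraHom_relatorSquares_apply_eq_zero [Fintype G] [DecidableEq G] {g : ι → G}
    {i : ι} {b : A} (hrel : ∑ j, ρ (g j) b = Fintype.card ι • b)
    (hfree : ∀ a, ρ (g i) a = a → a = 0) :
    ρ.asAlgebraHom (relatorSquares R g i) b = 0 := by
  have hrelator : ρ.asAlgebraHom (relator R g) b = 0 := by
    rw [asAlgebraHom_relator_apply, sum_sub_distrib, hrel, sum_const, card_univ, sub_self]
  have hsum := ρ.asAlgebraHom_subgroupSum_apply_eq_zero (Subgroup.mem_zpowers (g i)) hfree b
  simp only [relatorSquares, map_add, map_mul, LinearMap.add_apply, Module.End.mul_apply,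
    hrelator, hsum, map_zero, add_zero]

end

theorem exists_zsmul_eq_zero_of_sum_eq_card_nsmul {G A ι : Type*} [Group G] [Fintype G]
    [DecidableEq G] [AddCommGroup A] [Fintype ι] (ρ : Representation ℤ G A) {g : ι → G} {i : ι}
    {b : A} (hrel : ∑ j, ρ (g j) b = Fintype.card ι • b) (hfree : ∀ a, ρ (g i) a = a → a = 0) :
    ∃ n : ℤ, n ≠ 0 ∧ n • b = 0 ∧
      |n| ≤ (Fintype.card G).factorial *
        (4 * Fintype.card ι ^ 2 + Fintype.card G ^ 2) ^ Fintype.card G := by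
  set w := relatorSquares ℤ g i
  obtain ⟨a, ha⟩ := exists_mul_eq_det_smul_one w
  refine ⟨(rightMulMatrix w).det,
    det_rightMulMatrix_ne_zero fun _ => eq_zero_of_mul_relatorSquares_eq_zero (i := i), ?_, ?_⟩
  · calc (rightMulMatrix w).det • b = ρ.asAlgebraHom (a * w) b := by
          rw [ha, map_smul, map_one]; rfl
      _ = ρ.asAlgebraHom a (ρ.asAlgebraHom w b) := by rw [map_mul]; rfl
      _ = 0 := by rw [asAlgebraHom_relatorSquares_apply_eq_zero ρ hrel hfree, map_zero]
  · have := Matrix.det_le (A := rightMulMatrix w) (abv := AbsoluteValue.abs) fun _ _ =>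
      (abs_coeff_le_l1Norm w _).trans (l1Norm_relatorSquares_le g i)
    simpa [nsmul_eq_mul] using this

def ofAddAut {G A : Type*} [Group G] [AddCommGroup A] (σ : G →* Multiplicative (AddAut A)) :
    Representation ℤ G A where
  toFun g := (σ g).toAdd.toIntLinearEquiv.toLinearMap
  map_one' := by ext; simp
  map_mul' _ _ := by ext; simp

@[simp]
theorem ofAddAut_apply {G A : Type*} [Group G] [AddCommGroup A]
    (σ : G →* Multiplicative (AddAut A)) (g : G) (a : A) : ofAddAut σ g a = (σ g).toAdd a :=
  rfl

end Representation

theorem constant_sequence_independent_elementary_abelian_general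
    (c q : ℕ) :
    ∃ p₀ : ℕ,
      ∀ p : ℕ, p.Prime → p₀ < p →
        ∀ (A : Type*) [AddCommGroup A],
          Nat.card A = p ^ 2 →
          (∀ a : A, p • a = 0) →
          ∀ (H : Type*) [Group H] [Finite H],
            Nat.card H = q →
            ∀ σ : H →* Multiplicative (AddAut A),
              (∀ h : H, h ≠ 1 → ∀ a : A, (σ h).toAdd a = a → a = 0) →
              ∀ b : A, b ≠ 0 → ¬ IsHDependent σ (fun _ : Fin c => b) := by
  refine ⟨q.factorial * (4 * c ^ 2 + q ^ 2) ^ q, ?_⟩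
  rintro p hp hp₀ A _ - hpA H _ _ hH σ hfree b hb ⟨m, idx, h, hm, hidx, hh, hrel⟩
  classical
  have := Fintype.ofFinite H
  have := Fact.mk hp
  have hq : Fintype.card H = q := by rwa [← Nat.card_eq_fintype_card]
  have hmc : m ≤ c := by simpa using Fintype.card_le_of_injective idx hidx
  obtain ⟨n, hn, hnb, hnle⟩ :=
    (Representation.ofAddAut σ).exists_zsmul_eq_zero_of_sum_eq_card_nsmul (i := ⟨0, hm⟩)
      (b := b) (by simpa [eq_comm] using hrel) (hfree _ (hh _))
  have hpn : (p : ℤ) ∣ n := by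
    rw [← addOrderOf_eq_prime (hpA b) hb]
    exact addOrderOf_dvd_iff_zsmul_eq_zero.2 hnb
  have hp_le : (p : ℤ) ≤ |n| := Int.le_of_dvd (abs_pos.2 hn) ((dvd_abs _ _).2 hpn)
  rw [hq, Fintype.card_fin] at hnle
  have hn_le : |n| ≤ q.factorial * (4 * c ^ 2 + q ^ 2) ^ q := hnle.trans (by gcongr)
  have hp₀' : ((q.factorial * (4 * c ^ 2 + q ^ 2) ^ q : ℕ) : ℤ) < p := by exact_mod_cast hp₀
  push_cast at hp₀'
  linarith

/-- **Corollary 3.2.** For all positive integers `c`, `q` there is a constant `p₀`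
depending only on `c` and `q` such that: if `p > p₀` is a prime, `A` an elementary abelian
group of order `p²`, `H` a group of order `q` acting on `A` with `C_A(h) = 0` for all
nontrivial `h ∈ H`, and `b` a nonzero element of `A`, then the constant sequence
`(b, …, b)` of length `c` is `H`-independent. -/
theorem constant_sequence_independent_elementary_abelian
    (c q : ℕ) (hc : 0 < c) (hq : 0 < q) :
    ∃ p₀ : ℕ,
      ∀ p : ℕ, p.Prime → p₀ < p →
        ∀ (A : Type*) [AddCommGroup A],
          Nat.card A = p ^ 2 →
          (∀ a : A, p • a = 0) →
          ∀ (H : Type*) [Group H] [Finite H],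
            Nat.card H = q →
            ∀ σ : H →* Multiplicative (AddAut A),
              (∀ h : H, h ≠ 1 → ∀ a : A, (σ h).toAdd a = a → a = 0) →
              ∀ b : A, b ≠ 0 → ¬ IsHDependent σ (fun _ : Fin c => b) :=
  constant_sequence_independent_elementary_abelian_general c q
end
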